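/- Let (M, ∘, e) be an F-manifold of dimension n and X₀ a vector field such that the ∘-powers {X₀, X₀², …, X₀ⁿ} form a frame of TM. Assume there exists a torsion-free connection ∇̃ on TM, compatible with ∘, satisfying ∇̃_Y(X₀) ∘ Z = ∇̃_Z(X₀) ∘ Y for all vector fields Y, Z. Then the set of all torsion-free connections compatible with ∘ satisfying this condition is a special family on (M, ∘, e). -/

import Mathlib

/-- An algebraic model of the geometric setting of the paper: `R` plays the role
of the ring `C^∞(M)` of smooth functions on a manifold `M`, and `V` plays the
role of the `C^∞(M)`-module of smooth vector fields on `M`, equipped with its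
Lie bracket and with the action of vector fields on functions by derivations. -/
structure SmoothSetting (R V : Type*) [CommRing R] [LieRing V] [Module R V] where
  /-- the action `X(f)` of a vector field `X` on a function `f` -/
  deriv : V → R → R
  deriv_add : ∀ (X : V) (f g : R), deriv X (f + g) = deriv X f + deriv X g
  deriv_mul : ∀ (X : V) (f g : R), deriv X (f * g) = deriv X f * g + f * deriv X g
  add_deriv : ∀ (X Y : V) (f : R), deriv (X + Y) f = deriv X f + deriv Y f
  smul_deriv : ∀ (f : R) (X : V) (g : R), deriv (f • X) g = f * deriv X g
  bracket_deriv : ∀ (X Y : V) (f : R),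
    deriv ⁅X, Y⁆ f = deriv X (deriv Y f) - deriv Y (deriv X f)
  bracket_smul : ∀ (X : V) (f : R) (Y : V), ⁅X, f • Y⁆ = f • ⁅X, Y⁆ + deriv X f • Y

/-- `(m, e)` is an F-manifold structure: `m` is a fiber-preserving (i.e.
`C^∞(M)`-bilinear) commutative associative multiplication on vector fields with
unit field `e`, satisfying the Hertling–Manin integrability condition
`L_{X∘Y}(∘) = X ∘ L_Y(∘) + Y ∘ L_X(∘)`. -/
structure IsFManifold (R : Type*) {V : Type*} [CommRing R] [LieRing V] [Module R V]
    (m : V → V → V) (e : V) : Prop where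
  add_left : ∀ X Y Z : V, m (X + Y) Z = m X Z + m Y Z
  smul_left : ∀ (f : R) (X Y : V), m (f • X) Y = f • m X Y
  comm : ∀ X Y : V, m X Y = m Y X
  assoc : ∀ X Y Z : V, m (m X Y) Z = m X (m Y Z)
  unit : ∀ X : V, m e X = X
  hertling_manin : ∀ X Y Z W : V,
    ⁅m X Y, m Z W⁆ - m ⁅m X Y, Z⁆ W - m Z ⁅m X Y, W⁆ =
      m X (⁅Y, m Z W⁆ - m ⁅Y, Z⁆ W - m Z ⁅Y, W⁆)
        + m Y (⁅X, m Z W⁆ - m ⁅X, Z⁆ W - m Z ⁅X, W⁆)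

/-- The dual multiplication `X * Y := X ∘ Y ∘ ε⁻¹` determined by an invertible
vector field `ε` with inverse `εinv`. -/
def dualMul {V : Type*} (m : V → V → V) (εinv : V) : V → V → V :=
  fun X Y => m (m X Y) εinv

/-- `ε` (with inverse `εinv`) is an eventual identity on the F-manifold `(m, e)`:
it is invertible and the dual multiplication `X * Y = X ∘ Y ∘ ε⁻¹` defines an
F-manifold structure on `M` with unit field `ε`. -/
def IsEventualIdentity (R : Type*) {V : Type*} [CommRing R] [LieRing V] [Module R V]
    (m : V → V → V) (e ε εinv : V) : Prop :=
  m ε εinv = e ∧ IsFManifold R (dualMul m εinv) ε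

/-- `nabla` is a (Koszul) connection on the tangent bundle, i.e. on vector fields. -/
structure IsConnection {R V : Type*} [CommRing R] [LieRing V] [Module R V]
    (S : SmoothSetting R V) (nabla : V → V → V) : Prop where
  add_left : ∀ X Y Z : V, nabla (X + Y) Z = nabla X Z + nabla Y Z
  smul_left : ∀ (f : R) (X Y : V), nabla (f • X) Y = f • nabla X Y
  add_right : ∀ X Y Z : V, nabla X (Y + Z) = nabla X Y + nabla X Z
  leibniz : ∀ (X : V) (f : R) (Y : V), nabla X (f • Y) = S.deriv X f • Y + f • nabla X Y

/-- `nabla` is torsion-free. -/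
def IsTorsionFree {V : Type*} [LieRing V] (nabla : V → V → V) : Prop :=
  ∀ X Y, nabla X Y - nabla Y X = ⁅X, Y⁆

/-- The covariant derivative `∇_X(∘)(Y, Z)` of a multiplication `m` with respect
to a connection `nabla`. -/
def covMul {V : Type*} [LieRing V] (nabla m : V → V → V) (X Y Z : V) : V :=
  nabla X (m Y Z) - m (nabla X Y) Z - m Y (nabla X Z)

/-- `nabla` is compatible with the multiplication `m`: the vector valued tensor
`∇(∘)` is totally symmetric. -/
def IsCompatible {V : Type*} [LieRing V] (nabla m : V → V → V) : Prop :=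
  ∀ X Y Z, covMul nabla m X Y Z = covMul nabla m Y X Z ∧
    covMul nabla m X Y Z = covMul nabla m X Z Y

/-- The curvature `R^∇_{X,Y}Z = ∇_X∇_Y Z − ∇_Y∇_X Z − ∇_{[X,Y]}Z`. -/
def curv {V : Type*} [LieRing V] (nabla : V → V → V) (X Y Z : V) : V :=
  nabla X (nabla Y Z) - nabla Y (nabla X Z) - nabla ⁅X, Y⁆ Z

/-- `nabla` is flat. -/
def IsFlat {V : Type*} [LieRing V] (nabla : V → V → V) : Prop :=
  ∀ X Y Z, curv nabla X Y Z = 0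

/-- The curvature condition
`V∘R_{Z,Y}X + Y∘R_{V,Z}X + Z∘R_{Y,V}X = 0` of Lorenzoni–Pedroni. -/
def CurvCircCond {V : Type*} [LieRing V] (m nabla : V → V → V) : Prop :=
  ∀ X Y Z W, m W (curv nabla Z Y X) + m Y (curv nabla W Z X)
    + m Z (curv nabla Y W X) = 0

/-- A special family of connections on the F-manifold `(m, e)`: the family of
all `∇̃^V_X(Y) = ∇̃_X(Y) + V∘X∘Y`, `V` a vector field, where `∇̃` is some
torsion-free connection compatible with `m`. -/
def IsSpecialFamily {R V : Type*} [CommRing R] [LieRing V] [Module R V]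
    (S : SmoothSetting R V) (m : V → V → V) (SF : Set (V → V → V)) : Prop :=
  ∃ nt : V → V → V, IsConnection S nt ∧ IsTorsionFree nt ∧ IsCompatible nt m ∧
    SF = { n | ∃ W : V, n = fun X Y => nt X Y + m (m W X) Y }

/-- The connection `∇^W_X(Y) = ε∘∇̃_X(ε⁻¹∘Y) − ∇̃_{ε⁻¹∘Y}(ε)∘X + W*X*Y` on the
dual F-manifold, where `*` is the dual multiplication. -/
def dualConn {V : Type*} [LieRing V] (m : V → V → V) (ε εinv : V)
    (nt : V → V → V) (W : V) : V → V → V :=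
  fun X Y => m ε (nt X (m εinv Y)) - m (nt (m εinv Y) ε) X
    + dualMul m εinv (dualMul m εinv W X) Y

/-- The dual family `D_ε(S̃)` built from a chosen connection `nt ∈ S̃`. -/
def dualFamily {V : Type*} [LieRing V] (m : V → V → V) (ε εinv : V)
    (nt : V → V → V) : Set (V → V → V) :=
  { n | ∃ W : V, n = dualConn m ε εinv nt W }

/-- The dual family `D_ε(S̃)` of a family of connections `S̃`. -/
def dualFamilyOfSet {V : Type*} [LieRing V] (m : V → V → V) (ε εinv : V)
    (SF : Set (V → V → V)) : Set (V → V → V) :=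
  { n | ∃ nt ∈ SF, ∃ W : V, n = dualConn m ε εinv nt W }

/-- The second structure connection
`∇^F_X(Y) = ε∘∇̃_X(ε⁻¹∘Y) − ∇̃_{ε⁻¹∘Y}(ε)∘X` of `(M, ∘, e, ε, ∇̃)`. -/
def secondConn {V : Type*} [LieRing V] (m : V → V → V) (ε εinv : V)
    (nt : V → V → V) : V → V → V :=
  fun X Y => m ε (nt X (m εinv Y)) - m (nt (m εinv Y) ε) X

/-- The connection
`∇_X(Y) = ε∘∇̃_X(ε⁻¹∘Y) − ∇̃_{ε⁻¹∘Y}(ε)∘X + (1/2)[ε⁻¹,ε]∘X∘Y + U*X*Y`. -/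
def uDualConn {V : Type*} [LieRing V] [Module ℚ V] (m : V → V → V)
    (ε εinv U : V) (nt : V → V → V) : V → V → V :=
  fun X Y => secondConn m ε εinv nt X Y + (2 : ℚ)⁻¹ • m (m ⁅εinv, ε⁆ X) Y
    + dualMul m εinv (dualMul m εinv U X) Y

/-- The `k`-th power `X^k` of a vector field with respect to the multiplication
`m` with unit `e`. -/
def mpow {V : Type*} (m : V → V → V) (e X : V) : ℕ → V
  | 0 => e
  | k + 1 => m X (mpow m e X k)

/-- The Legendre transformation `L_u(S̃) = { u⁻¹∘∇̃_X(u∘Y) : ∇̃ ∈ S̃ }` of a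
family of connections `S̃` by an invertible vector field `u` (with inverse
`uinv`). -/
def legFamily {V : Type*} (m : V → V → V) (uinv u : V)
    (SF : Set (V → V → V)) : Set (V → V → V) :=
  { n | ∃ nt ∈ SF, n = fun X Y => m uinv (nt X (m u Y)) }

/-! The difference `D = ∇' − ∇` of two torsion-free compatible connections is a symmetric tensor
whose covariant derivative of `∘` is totally symmetric. This forces `D_Y(e) = W∘Y` with
`W = D_e(e)`, and the set of fields `A` with `D_Y(A) = W∘A∘Y` for all `Y` is closed under `∘`.
The condition on `∇̃_Y(X₀)` puts `X₀` in that set, hence every power of `X₀`, and since these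
powers form a frame, `D_X(Y) = W∘X∘Y` everywhere. Conversely, adding `W∘X∘Y` to `∇̃` changes
`∇̃(∘)` by the totally symmetric tensor `−W∘X∘Y∘Z`, so it preserves all the defining conditions. -/

namespace IsFManifold

variable {R V : Type*} [CommRing R] [LieRing V] [Module R V] {m : V → V → V} {e : V}

theorem mul_unit (hF : IsFManifold R m e) (X : V) : m X e = X := by
  rw [hF.comm]
  exact hF.unit X

theorem add_right (hF : IsFManifold R m e) (X Y Z : V) : m X (Y + Z) = m X Y + m X Z := by
  rw [hF.comm, hF.add_left, hF.comm Y, hF.comm Z]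

theorem smul_right (hF : IsFManifold R m e) (f : R) (X Y : V) : m X (f • Y) = f • m X Y := by
  rw [hF.comm, hF.smul_left, hF.comm]

theorem zero_left (hF : IsFManifold R m e) (X : V) : m 0 X = 0 := by
  simpa using hF.add_left 0 0 X

theorem zero_right (hF : IsFManifold R m e) (X : V) : m X 0 = 0 := by
  rw [hF.comm]
  exact hF.zero_left X

abbrev toCommRing (hF : IsFManifold R m e) : CommRing V :=
  { (inferInstance : AddCommGroup V) with
    mul := m
    one := e
    left_distrib := hF.add_right
    right_distrib := hF.add_left
    zero_mul := hF.zero_left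
    mul_zero := hF.zero_right
    mul_assoc := hF.assoc
    one_mul := hF.unit
    mul_one := hF.mul_unit
    mul_comm := hF.comm }

theorem sub_left (hF : IsFManifold R m e) (X Y Z : V) : m (X - Y) Z = m X Z - m Y Z := by
  let := hF.toCommRing
  exact sub_mul X Y Z

theorem mul_right_comm (hF : IsFManifold R m e) (A B C : V) : m (m A B) C = m (m A C) B := by
  rw [hF.assoc, hF.comm B, ← hF.assoc]

def mulLeft (hF : IsFManifold R m e) (A : V) : V →ₗ[R] V where
  toFun := m A
  map_add' := hF.add_right A
  map_smul' f := hF.smul_right f A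

end IsFManifold

def MulCovSymmAt {V : Type*} (m nabla : V → V → V) (X0 : V) : Prop :=
  ∀ Y Z, m (nabla Y X0) Z = m (nabla Z X0) Y

section DifferenceTensor

variable {R V : Type*} [CommRing R] [LieRing V] [Module R V] {m : V → V → V} {e : V}

theorem IsTorsionFree.sub_symm {nabla nabla' : V → V → V} (h : IsTorsionFree nabla)
    (h' : IsTorsionFree nabla') (X Y : V) : (nabla' - nabla) X Y = (nabla' - nabla) Y X := by
  simp only [Pi.sub_apply]
  rw [sub_eq_sub_iff_sub_eq_sub, h X Y, h' X Y]

def IsConnection.subLinearMap {S : SmoothSetting R V} {nabla nabla' : V → V → V}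
    (hc : IsConnection S nabla) (hc' : IsConnection S nabla') (X : V) : V →ₗ[R] V where
  toFun := (nabla' - nabla) X
  map_add' Y Z := by
    simp only [Pi.sub_apply, hc.add_right, hc'.add_right]
    abel
  map_smul' f Y := by
    simp only [Pi.sub_apply, hc.leibniz, hc'.leibniz, RingHom.id_apply, smul_sub]
    abel

theorem covMul_sub (hF : IsFManifold R m e) (nabla nabla' : V → V → V) (X Y Z : V) :
    covMul (nabla' - nabla) m X Y Z = covMul nabla' m X Y Z - covMul nabla m X Y Z := by
  let := hF.toCommRing
  have hm : ∀ A B, m A B = A * B := fun _ _ => rfl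
  simp only [covMul, Pi.sub_apply, hm]
  ring

theorem IsCompatible.covMul_sub_comm (hF : IsFManifold R m e) {nabla nabla' : V → V → V}
    (h : IsCompatible nabla m) (h' : IsCompatible nabla' m) (X Y Z : V) :
    covMul (nabla' - nabla) m X Y Z = covMul (nabla' - nabla) m Y X Z := by
  rw [covMul_sub hF, covMul_sub hF, (h X Y Z).1, (h' X Y Z).1]

theorem MulCovSymmAt.sub (hF : IsFManifold R m e) {nabla nabla' : V → V → V} {X0 : V}
    (h : MulCovSymmAt m nabla X0) (h' : MulCovSymmAt m nabla' X0) :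
    MulCovSymmAt m (nabla' - nabla) X0 := fun Y Z => by
  simp only [Pi.sub_apply, hF.sub_left, h Y Z, h' Y Z]

end DifferenceTensor

section SymmetricCovMul

variable {R V : Type*} [CommRing R] [LieRing V] [Module R V] {m : V → V → V} {e : V}
  (hF : IsFManifold R m e) {D : V → V → V} (hcov : ∀ X Y Z, covMul D m X Y Z = covMul D m Y X Z)
include hF hcov

theorem apply_unit_of_covMul_comm (X : V) : D X e = m (D e e) X := by
  have h := hcov X e e
  simp only [covMul, hF.unit, hF.mul_unit] at h
  let := hF.toCommRing
  have hm : ∀ A B, m A B = A * B := fun _ _ => rfl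
  simp only [hm] at h ⊢
  linear_combination -h

variable (hsymm : ∀ X Y, D X Y = D Y X)
include hsymm

theorem apply_mul_of_covMul_comm {W A B : V} (hA : ∀ Y, D Y A = m (m W A) Y)
    (hB : ∀ Y, D Y B = m (m W B) Y) (Y : V) : D Y (m A B) = m (m W (m A B)) Y := by
  have h := hcov Y A B
  rw [covMul, covMul, hsymm A Y, hsymm A (m Y B)] at h
  simp only [hA, hB] at h
  let := hF.toCommRing
  have hm : ∀ A B, m A B = A * B := fun _ _ => rfl
  simp only [hm] at h ⊢
  linear_combination h

theorem apply_eq_of_mulCovSymmAt {X0 : V} (hX0 : MulCovSymmAt m D X0) (Y : V) :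
    D Y X0 = m (m (D e e) X0) Y := by
  have h := hX0 Y e
  rw [hF.mul_unit] at h
  rw [h, hsymm e X0, apply_unit_of_covMul_comm hF hcov]

theorem apply_mpow_of_mulCovSymmAt {X0 : V} (hX0 : MulCovSymmAt m D X0) (k : ℕ) (Y : V) :
    D Y (mpow m e X0 k) = m (m (D e e) (mpow m e X0 k)) Y := by
  induction k generalizing Y with
  | zero =>
    rw [mpow, hF.mul_unit]
    exact apply_unit_of_covMul_comm hF hcov Y
  | succ k ih =>
    exact apply_mul_of_covMul_comm hF hcov hsymm
      (apply_eq_of_mulCovSymmAt hF hcov hsymm hX0) ih Y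

end SymmetricCovMul

section SpecialFamily

variable {R V : Type*} [CommRing R] [LieRing V] [Module R V] {m : V → V → V} {e : V}
  {S : SmoothSetting R V}

theorem exists_eq_add_mul_of_mpow_basis (hF : IsFManifold R m e) {ι : Type*}
    (b : Module.Basis ι R V) {X0 : V} (hb : ∀ i, ∃ k, b i = mpow m e X0 k)
    {nabla nabla' : V → V → V} (hc : IsConnection S nabla) (hc' : IsConnection S nabla')
    (htf : IsTorsionFree nabla) (htf' : IsTorsionFree nabla')
    (hcomp : IsCompatible nabla m) (hcomp' : IsCompatible nabla' m)
    (hX0 : MulCovSymmAt m nabla X0) (hX0' : MulCovSymmAt m nabla' X0) :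
    ∃ W, nabla' = fun X Y => nabla X Y + m (m W X) Y := by
  have hcov := hcomp.covMul_sub_comm hF hcomp'
  have hsymm := htf.sub_symm htf'
  have hpow := apply_mpow_of_mulCovSymmAt hF hcov hsymm (hX0.sub hF hX0')
  set D := nabla' - nabla
  have hD : ∀ X Y, D X Y = m (m (D e e) X) Y := fun X =>
    LinearMap.congr_fun (b.ext fun i => by
      obtain ⟨k, hk⟩ := hb i
      change D X (b i) = m (m (D e e) X) (b i)
      rw [hk, hpow, hF.mul_right_comm] :
        hc.subLinearMap hc' X = hF.mulLeft (m (D e e) X))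
  refine ⟨D e e, funext₂ fun X Y => ?_⟩
  rw [← hD]
  exact (add_sub_cancel (nabla X Y) (nabla' X Y)).symm

theorem IsConnection.add_mul (hF : IsFManifold R m e) {nabla : V → V → V}
    (hc : IsConnection S nabla) (W : V) :
    IsConnection S fun X Y => nabla X Y + m (m W X) Y where
  add_left X Y Z := by
    rw [hc.add_left, hF.add_right, hF.add_left]
    abel
  smul_left f X Y := by rw [hc.smul_left, hF.smul_right, hF.smul_left, smul_add]
  add_right X Y Z := by
    rw [hc.add_right, hF.add_right]
    abel
  leibniz X f Y := by
    rw [hc.leibniz, hF.smul_right, smul_add]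
    abel

theorem IsTorsionFree.add_mul (hF : IsFManifold R m e) {nabla : V → V → V}
    (h : IsTorsionFree nabla) (W : V) : IsTorsionFree fun X Y => nabla X Y + m (m W X) Y :=
  fun X Y => by
    change _ + _ - (_ + _) = _
    rw [← h X Y, hF.mul_right_comm W X]
    abel

theorem covMul_add_mul (hF : IsFManifold R m e) (nabla : V → V → V) (W X Y Z : V) :
    covMul (fun X Y => nabla X Y + m (m W X) Y) m X Y Z
      = covMul nabla m X Y Z - m (m (m W X) Y) Z := by
  let := hF.toCommRing
  have hm : ∀ A B, m A B = A * B := fun _ _ => rfl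
  simp only [covMul, hm]
  ring

theorem IsCompatible.add_mul (hF : IsFManifold R m e) {nabla : V → V → V}
    (h : IsCompatible nabla m) (W : V) : IsCompatible (fun X Y => nabla X Y + m (m W X) Y) m :=
  fun X Y Z => by
    simp only [covMul_add_mul hF]
    constructor
    · rw [(h X Y Z).1, hF.mul_right_comm W X]
    · rw [(h X Y Z).2, hF.mul_right_comm (m W X)]

theorem MulCovSymmAt.add_mul (hF : IsFManifold R m e) {nabla : V → V → V} {X0 : V}
    (h : MulCovSymmAt m nabla X0) (W : V) :
    MulCovSymmAt m (fun X Y => nabla X Y + m (m W X) Y) X0 := fun Y Z => by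
  let := hF.toCommRing
  have hm : ∀ A B, m A B = A * B := fun _ _ => rfl
  have h := h Y Z
  simp only [hm] at h ⊢
  linear_combination h

end SpecialFamily

/-- **Example 5.6 i.** Let `(M, ∘, e)` be an F-manifold of
dimension `n` and `X₀` a vector field whose `∘`-powers `X₀, X₀², …, X₀ⁿ` form a
frame of `TM`. If there exists a torsion-free connection `∇̃`, compatible with
`∘`, with `∇̃_Y(X₀)∘Z = ∇̃_Z(X₀)∘Y` for all `Y, Z`, then the set of all
torsion-free compatible connections satisfying this condition is a special
family on `(M, ∘, e)`. -/
theorem statement8 {R V : Type*} [CommRing R] [LieRing V] [Module R V]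
    (S : SmoothSetting R V) (m : V → V → V) (e : V)
    (hF : IsFManifold R m e) (n : ℕ) (X0 : V)
    (hframe : ∃ b : Module.Basis (Fin n) R V, ∀ i : Fin n, b i = mpow m e X0 ((i : ℕ) + 1))
    (hex : ∃ nt : V → V → V, IsConnection S nt ∧ IsTorsionFree nt ∧
      IsCompatible nt m ∧ ∀ Y Z : V, m (nt Y X0) Z = m (nt Z X0) Y) :
    IsSpecialFamily S m
      { nt : V → V → V | IsConnection S nt ∧ IsTorsionFree nt ∧
        IsCompatible nt m ∧ ∀ Y Z : V, m (nt Y X0) Z = m (nt Z X0) Y } := by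
  obtain ⟨b, hb⟩ := hframe
  obtain ⟨nt, hc, htf, hcomp, hX0⟩ := hex
  refine ⟨nt, hc, htf, hcomp, Set.ext fun nabla => ⟨?_, ?_⟩⟩
  · rintro ⟨hc', htf', hcomp', hX0'⟩
    exact exists_eq_add_mul_of_mpow_basis hF b (fun i => ⟨i + 1, hb i⟩) hc hc' htf htf'
      hcomp hcomp' hX0 hX0'
  · rintro ⟨W, rfl⟩
    exact ⟨hc.add_mul hF W, htf.add_mul hF W, hcomp.add_mul hF W, MulCovSymmAt.add_mul hF hX0 W⟩
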